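/- The map J φ = z̄·conj(φ) is a well-defined antilinear bijection from ker S_{a,b} onto ker S_{b̄,ā}; equivalently, conj(ker S_{a,b}) = z·ker S_{b̄,ā}. -/

import Mathlib

open MeasureTheory Complex Real AddCircle
open scoped ENNReal ComplexConjugate

noncomputable section

instance : Fact (0 < 2 * π) := ⟨by positivity⟩

/-- Normalized Haar (Lebesgue) measure on the unit circle, realized as `AddCircle (2π)`. -/
abbrev μT : Measure (AddCircle (2 * π)) := AddCircle.haarAddCircle

/-- The Lebesgue space `L²(𝕋)`. -/
abbrev L2 : Type := Lp ℂ 2 μT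

/-- The space `L^∞(𝕋)`. -/
abbrev Linf : Type := Lp ℂ ∞ μT

/-- Multiplication of an `L²` function by an `L^∞` function, as an element of `L²`. -/
def mul2 (a : Linf) (f : L2) : L2 :=
  ((Lp.memLp f).smul (Lp.memLp a)).toLp ((a : AddCircle (2 * π) → ℂ) • (f : AddCircle (2 * π) → ℂ))

lemma mul2_coe (a : Linf) (f : L2) :
    (mul2 a f : AddCircle (2 * π) → ℂ) =ᵐ[μT] fun x => a x * f x :=
  (MemLp.coeFn_toLp _)

/-- Multiplication in `L^∞`. -/
def mulInf (a b : Linf) : Linf :=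
  ((Lp.memLp b).smul (Lp.memLp a)).toLp ((a : AddCircle (2 * π) → ℂ) • (b : AddCircle (2 * π) → ℂ))

lemma mulInf_coe (a b : Linf) :
    (mulInf a b : AddCircle (2 * π) → ℂ) =ᵐ[μT] fun x => a x * b x :=
  (MemLp.coeFn_toLp _)

/-- Complex conjugation on `Lp`. -/
def conjLp {p : ℝ≥0∞} [Fact (1 ≤ p)] (f : Lp ℂ p μT) : Lp ℂ p μT :=
  MemLp.toLp (fun x => conj (f x))
    ⟨continuous_star.comp_aestronglyMeasurable (Lp.aestronglyMeasurable f),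
      by
        rw [eLpNorm_congr_norm_ae (g := (f : AddCircle (2 * π) → ℂ))
          (Filter.Eventually.of_forall fun x => by simp)]
        exact (Lp.memLp f).2⟩

lemma conjLp_coe {p : ℝ≥0∞} [Fact (1 ≤ p)] (f : Lp ℂ p μT) :
    (conjLp f : AddCircle (2 * π) → ℂ) =ᵐ[μT] fun x => conj (f x) :=
  (MemLp.coeFn_toLp _)

/-- The Hardy space `H²`, as the subspace of `L²(𝕋)` of functions whose negative Fourier
coefficients vanish. -/
def Hardy : Submodule ℂ L2 where
  carrier := {f | ∀ n : ℤ, n < 0 → fourierBasis.repr f n = 0}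
  add_mem' := fun hf hg n hn => by simp [hf n hn, hg n hn]
  zero_mem' := fun n hn => by simp
  smul_mem' := fun c f hf n hn => by simp [hf n hn]

lemma hardy_isClosed : IsClosed (Hardy : Set L2) := by
  have h : (Hardy : Set L2)
      = ⋂ n : ℤ, ⋂ _ : n < 0, {f : L2 | fourierBasis.repr f n = 0} := by
    ext f
    simp [Hardy, Set.mem_iInter]
  rw [h]
  refine isClosed_iInter fun n => isClosed_iInter fun hn => ?_
  have hc : Continuous fun f : L2 => fourierBasis.repr f n := by
    have : (fun f : L2 => fourierBasis.repr f n)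
        = fun f : L2 => (innerSL ℂ (fourierBasis n : L2)) f := by
      ext f
      rw [HilbertBasis.repr_apply_apply]
      rfl
    rw [this]
    exact (innerSL ℂ (fourierBasis n : L2)).continuous
  exact isClosed_eq hc continuous_const

instance : CompleteSpace Hardy := hardy_isClosed.completeSpace_coe

/-- The Riesz projection `P⁺ : L² → L²`, i.e. the orthogonal projection onto `H²`. -/
def Pplus : L2 →L[ℂ] L2 := Hardy.subtypeL.comp Hardy.orthogonalProjectionOnto

/-- The complementary projection `P⁻ = I - P⁺`. -/
def Pminus : L2 →L[ℂ] L2 := ContinuousLinearMap.id ℂ L2 - Pplus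

lemma mul2_norm_le (a : Linf) (f : L2) : ‖mul2 a f‖ ≤ ‖a‖ * ‖f‖ := by
  rw [mul2, Lp.norm_toLp]
  have h := eLpNorm_smul_le_eLpNorm_top_mul_eLpNorm 2
    (Lp.aestronglyMeasurable f) (φ := (a : AddCircle (2 * π) → ℂ))
  refine le_trans (ENNReal.toReal_mono ?_ h) ?_
  · exact ENNReal.mul_ne_top (Lp.memLp a).2.ne (Lp.memLp f).2.ne
  · rw [ENNReal.toReal_mul, Lp.norm_def, Lp.norm_def]

/-- Multiplication by an `L^∞` function `a`, as a bounded operator `M_a` on `L²`. -/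
def Mult (a : Linf) : L2 →L[ℂ] L2 :=
  LinearMap.mkContinuous
    { toFun := mul2 a
      map_add' := fun f g => by
        refine Lp.ext ?_
        filter_upwards [mul2_coe a (f + g), mul2_coe a f, mul2_coe a g,
          Lp.coeFn_add f g, Lp.coeFn_add (mul2 a f) (mul2 a g)] with x h1 h2 h3 h4 h5
        simp only [h1, h5, Pi.add_apply, h2, h3, h4, mul_add]
      map_smul' := fun c f => by
        refine Lp.ext ?_
        filter_upwards [mul2_coe a (c • f), mul2_coe a f,
          Lp.coeFn_smul c f, Lp.coeFn_smul c (mul2 a f)] with x h1 h2 h3 h4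
        simp only [h1, h4, Pi.smul_apply, h2, h3, smul_eq_mul, RingHom.id_apply]
        ring }
    ‖a‖ (fun f => mul2_norm_le a f)

/-- The paired operator `S_{a,b} = a P⁺ + b P⁻` on `L²(𝕋)`. -/
def pairedS (a b : Linf) : L2 →L[ℂ] L2 :=
  (Mult a).comp Pplus + (Mult b).comp Pminus

/-- The transposed paired operator `Σ_{a,b} = P⁺ a + P⁻ b` on `L²(𝕋)`. -/
def pairedSigma (a b : Linf) : L2 →L[ℂ] L2 :=
  Pplus.comp (Mult a) + Pminus.comp (Mult b)

/-- Membership in `H^∞`: an `L^∞` function whose negative Fourier coefficients vanish. -/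
def MemHinf (a : Linf) : Prop := ∀ n : ℤ, n < 0 → fourierCoeff (a : AddCircle (2 * π) → ℂ) n = 0

/-- A pair `{a,b}` is nondegenerate if `a`, `b` and `a - b` are all nonzero a.e. on `𝕋`. -/
def Nondegenerate (a b : Linf) : Prop :=
  (∀ᵐ x ∂μT, a x ≠ 0) ∧ (∀ᵐ x ∂μT, b x ≠ 0) ∧ (∀ᵐ x ∂μT, a x - b x ≠ 0)

/-! The map `J f = z̄ · conj f` acts on Fourier coefficients by `(J f)ₙ = conj f₋₁₋ₙ`, and
`n ↦ -1 - n` is an involution of `ℤ` exchanging `n ≥ 0` with `n < 0`. Hence `J` is an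
involution of `L²` with `P⁺ J = J P⁻` and `P⁻ J = J P⁺`; together with `J (c f) = c̄ · J f`
this gives `S_{b̄,ā} J = J S_{a,b}`, so `J` maps `ker S_{a,b}` onto `ker S_{b̄,ā}`.
Since `conj f = z · J f`, the second description follows by multiplying by `z`. -/

lemma fourierCoeff_fourier_mul_conj {T : ℝ} [Fact (0 < T)] (f : AddCircle T → ℂ) (m n : ℤ) :
    fourierCoeff (fun x => fourier m x * conj (f x)) n = conj (fourierCoeff f (m - n)) := by
  simp only [fourierCoeff, ← integral_conj]
  congr 1
  ext x
  simp only [smul_eq_mul, map_mul, ← fourier_neg, neg_sub, ← mul_assoc, ← fourier_add]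
  ring_nf

lemma ext_fourierBasis_repr {f g : L2}
    (h : ∀ n, fourierBasis.repr f n = fourierBasis.repr g n) : f = g :=
  fourierBasis.repr.injective (lp.ext (funext h))

lemma fourierBasis_mem_Hardy {m : ℤ} (hm : 0 ≤ m) : (fourierBasis m : L2) ∈ Hardy := by
  intro n hn
  rw [fourierBasis.repr_self, lp.single_apply, Pi.single_eq_of_ne (by omega)]

lemma fourierBasis_repr_Pplus (f : L2) (n : ℤ) :
    fourierBasis.repr (Pplus f) n = if n < 0 then 0 else fourierBasis.repr f n := by
  split_ifs with hn
  · exact (Hardy.orthogonalProjectionOnto f).2 n hn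
  · have hperp : inner ℂ (fourierBasis n : L2) (f - Pplus f) = 0 :=
      Submodule.inner_right_of_mem_orthogonal (fourierBasis_mem_Hardy (not_lt.mp hn))
        (Submodule.sub_starProjection_mem_orthogonal f)
    rw [← fourierBasis.repr_apply_apply, map_sub, lp.coeFn_sub, Pi.sub_apply] at hperp
    exact (sub_eq_zero.mp hperp).symm

lemma Pplus_add_Pminus (f : L2) : Pplus f + Pminus f = f := by
  simp [Pminus]

lemma fourierBasis_repr_Pminus (f : L2) (n : ℤ) :
    fourierBasis.repr (Pminus f) n = if n < 0 then fourierBasis.repr f n else 0 := by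
  have h := congrArg (fun g => fourierBasis.repr g n) (Pplus_add_Pminus f)
  simp only [map_add, lp.coeFn_add, Pi.add_apply, fourierBasis_repr_Pplus] at h
  split_ifs at h ⊢ <;> linear_combination h

def Jmap (f : L2) : L2 := mul2 (fourierLp ⊤ (-1)) (conjLp f)

lemma Jmap_coe (f : L2) :
    (Jmap f : AddCircle (2 * π) → ℂ) =ᵐ[μT] fun x => fourier (-1) x * conj (f x) := by
  filter_upwards [mul2_coe (fourierLp ⊤ (-1)) (conjLp f), conjLp_coe f,
    coeFn_fourierLp ⊤ (-1)] with x h1 h2 h3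
  rw [Jmap, h1, h2, h3]

lemma fourierBasis_repr_Jmap (f : L2) (n : ℤ) :
    fourierBasis.repr (Jmap f) n = conj (fourierBasis.repr f (-1 - n)) := by
  rw [fourierBasis_repr, fourierBasis_repr, fourierCoeff_congr_ae (Jmap_coe f),
    fourierCoeff_fourier_mul_conj]

lemma Jmap_involutive : Function.Involutive Jmap := fun f =>
  ext_fourierBasis_repr fun n => by
    rw [fourierBasis_repr_Jmap, fourierBasis_repr_Jmap, show -1 - (-1 - n) = n by ring, conj_conj]

lemma Jmap_zero : Jmap 0 = 0 :=
  ext_fourierBasis_repr fun n => by simp [fourierBasis_repr_Jmap]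

lemma Jmap_add (f g : L2) : Jmap (f + g) = Jmap f + Jmap g :=
  ext_fourierBasis_repr fun n => by simp [fourierBasis_repr_Jmap]

lemma Jmap_mul2 (a : Linf) (f : L2) : Jmap (mul2 a f) = mul2 (conjLp a) (Jmap f) := by
  refine Lp.ext ?_
  filter_upwards [Jmap_coe (mul2 a f), mul2_coe a f, mul2_coe (conjLp a) (Jmap f),
    conjLp_coe a, Jmap_coe f] with x h1 h2 h3 h4 h5
  rw [h1, h2, h3, h4, h5, map_mul]
  ring

lemma Pplus_Jmap (f : L2) : Pplus (Jmap f) = Jmap (Pminus f) := by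
  refine ext_fourierBasis_repr fun n => ?_
  rw [fourierBasis_repr_Pplus, fourierBasis_repr_Jmap, fourierBasis_repr_Jmap,
    fourierBasis_repr_Pminus]
  by_cases hn : n < 0
  · simp [hn, show ¬ -1 - n < 0 by omega]
  · simp [hn, show -1 - n < 0 by omega]

lemma Pminus_Jmap (f : L2) : Pminus (Jmap f) = Jmap (Pplus f) :=
  calc Pminus (Jmap f) = Jmap f - Pplus (Jmap f) := rfl
    _ = Jmap (Pplus f) + Jmap (Pminus f) - Jmap (Pminus f) := by
      rw [Pplus_Jmap, ← Jmap_add, Pplus_add_Pminus]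
    _ = Jmap (Pplus f) := add_sub_cancel_right _ _

lemma pairedS_apply (a b : Linf) (f : L2) :
    pairedS a b f = mul2 a (Pplus f) + mul2 b (Pminus f) := rfl

lemma pairedS_Jmap (a b : Linf) (f : L2) :
    pairedS (conjLp b) (conjLp a) (Jmap f) = Jmap (pairedS a b f) := by
  rw [pairedS_apply, pairedS_apply, Jmap_add, Jmap_mul2, Jmap_mul2, Pplus_Jmap, Pminus_Jmap,
    add_comm]

lemma pairedS_Jmap_eq_zero_iff (a b : Linf) (f : L2) :
    pairedS (conjLp b) (conjLp a) (Jmap f) = 0 ↔ pairedS a b f = 0 := by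
  rw [pairedS_Jmap, Jmap_involutive.injective.eq_iff' Jmap_zero]

lemma conjLp_eq_mul2_Jmap (f : L2) : conjLp f = mul2 (fourierLp ⊤ 1) (Jmap f) := by
  refine Lp.ext ?_
  filter_upwards [conjLp_coe f, mul2_coe (fourierLp ⊤ 1) (Jmap f), Jmap_coe f,
    coeFn_fourierLp ⊤ 1] with x h1 h2 h3 h4
  rw [h1, h2, h3, h4, ← mul_assoc, ← fourier_add, add_neg_cancel, fourier_zero, one_mul]

/-- The map `J φ = z̄ · conj φ` is a (antilinear) bijection from `ker S_{a,b}` onto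
`ker S_{b̄,ā}`; equivalently `conj (ker S_{a,b}) = z · ker S_{b̄,ā}`. -/
theorem statement18 (a b : Linf) :
    Set.BijOn (fun f : L2 => mul2 (fourierLp ⊤ (-1)) (conjLp f))
        {f : L2 | pairedS a b f = 0} {g : L2 | pairedS (conjLp b) (conjLp a) g = 0}
    ∧ (fun f : L2 => conjLp f) '' {f : L2 | pairedS a b f = 0}
        = (fun g : L2 => mul2 (fourierLp ⊤ 1) g) ''
            {g : L2 | pairedS (conjLp b) (conjLp a) g = 0} := by
  have hbij : Set.BijOn Jmap {f : L2 | pairedS a b f = 0}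
      {g : L2 | pairedS (conjLp b) (conjLp a) g = 0} :=
    (Jmap_involutive.toPerm Jmap).bijOn fun f => pairedS_Jmap_eq_zero_iff a b f
  refine ⟨hbij, ?_⟩
  have hconj : (fun f : L2 => conjLp f) = (fun g : L2 => mul2 (fourierLp ⊤ 1) g) ∘ Jmap :=
    funext conjLp_eq_mul2_Jmap
  rw [hconj, Set.image_comp, hbij.image_eq]

end
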